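/- (Pseudo-additivity for independent variables) If the joint distribution on X × Y is a product, p(x,y) = p(x)p(y), then S_{k,r}(X,Y) = S_{k,r}(X) + S_{k,r}(Y) - 2k S_{k,r}(X) S_{k,r}(Y). -/
import Mathlib


/-- Two-parameter deformed logarithm: `ln_{k,r}(x) = (x^(2k) - 1) / (2k x^(r+k))`. -/
noncomputable def lnkr (k r x : ℝ) : ℝ := (x ^ (2 * k) - 1) / (2 * k * x ^ (r + k))

lemma lnkr_key (k r : ℝ) {x : ℝ} (hx : 0 < x) :
    x ^ (r + k + 1) * lnkr k r x = (x ^ (2 * k) * x - x) / (2 * k) := by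
  unfold lnkr
  have h1 : x ^ (r + k + 1) = x ^ (r + k) * x := by
    rw [Real.rpow_add hx, Real.rpow_one]
  have h2 : x ^ (r + k) ≠ 0 := (Real.rpow_pos_of_pos hx _).ne'
  rw [h1]
  rcases eq_or_ne k 0 with hk | hk
  · simp [hk]
  · field_simp

theorem pseudo_additivity {X Y : Type*} [Fintype X] [Fintype Y]
    (p : X → ℝ) (q : Y → ℝ) (hp : ∀ x, 0 < p x) (hq : ∀ y, 0 < q y)
    (hpsum : ∑ x, p x = 1) (hqsum : ∑ y, q y = 1)
    (k r : ℝ) (hk : k ≠ 0) :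
    -∑ x, ∑ y, (p x * q y) ^ (r + k + 1) * lnkr k r (p x * q y) =
      (-∑ x, (p x) ^ (r + k + 1) * lnkr k r (p x)) +
        (-∑ y, (q y) ^ (r + k + 1) * lnkr k r (q y)) -
          2 * k * (-∑ x, (p x) ^ (r + k + 1) * lnkr k r (p x)) *
            (-∑ y, (q y) ^ (r + k + 1) * lnkr k r (q y)) := by
  have hA : ∑ x, (p x) ^ (r + k + 1) * lnkr k r (p x)
      = ((∑ x, (p x) ^ (2 * k) * p x) - 1) / (2 * k) := by
    rw [Finset.sum_congr rfl fun x _ => lnkr_key k r (hp x),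
      ← Finset.sum_div, Finset.sum_sub_distrib, hpsum]
  have hB : ∑ y, (q y) ^ (r + k + 1) * lnkr k r (q y)
      = ((∑ y, (q y) ^ (2 * k) * q y) - 1) / (2 * k) := by
    rw [Finset.sum_congr rfl fun y _ => lnkr_key k r (hq y),
      ← Finset.sum_div, Finset.sum_sub_distrib, hqsum]
  have hAB : ∑ x, ∑ y, (p x * q y) ^ (r + k + 1) * lnkr k r (p x * q y)
      = ((∑ x, (p x) ^ (2 * k) * p x) * (∑ y, (q y) ^ (2 * k) * q y) - 1) / (2 * k) := by
    have : ∀ x y, (p x * q y) ^ (r + k + 1) * lnkr k r (p x * q y)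
        = ((p x) ^ (2 * k) * p x * ((q y) ^ (2 * k) * q y) - p x * q y) / (2 * k) := by
      intro x y
      rw [lnkr_key k r (mul_pos (hp x) (hq y)),
        Real.mul_rpow (hp x).le (hq y).le]
      ring_nf
    have h2 : (∑ x, ∑ y, (p x * q y) ^ (r + k + 1) * lnkr k r (p x * q y))
        = ∑ x, ∑ y, ((p x) ^ (2 * k) * p x * ((q y) ^ (2 * k) * q y) - p x * q y) / (2 * k) := by
      exact Finset.sum_congr rfl fun x _ => Finset.sum_congr rfl fun y _ => this x y
    rw [h2]
    simp only [← Finset.sum_div]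
    simp only [Finset.sum_sub_distrib]
    rw [← Finset.sum_mul_sum, ← Finset.sum_mul_sum, hpsum, hqsum]
    norm_num
  rw [hA, hB, hAB]
  field_simp
  ring
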